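/- arXiv:2004.13090 — 3 statements merged into one kernel-verified Lean document; each statement's English description precedes it below -/
import Mathlib

section
/- Let l > 0, β̃ > 0, let c, D : [0,l] → ℝ be continuously differentiable with D(x) > 0, let μ : [0,l] → ℝ be continuous, set β(x) = β̃·μ(x), and φ(x) = exp(∫₀ˣ c(y)/D(y) dy). Then φ satisfies 2β(x)φ(x) = λ·( [c(x)φ(x) − D(x)φ'(x)]' + (β(x)+μ(x))φ(x) ) for all x ∈ [0,l] with λ = 2β̃/(β̃+1). -/
/-! Since φ' = (c/D) φ, the flux c φ − D φ' vanishes identically on [0,l], so its derivative is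
zero and the mortality operator reduces to (β + μ) φ = (β̃ + 1) μ φ, while the birth operator is
2 β̃ μ φ. -/

open Set

theorem hasDerivWithinAt_exp_intervalIntegral {f : ℝ → ℝ} {a b z : ℝ}
    (hf : ContinuousOn f (Icc a b)) (hz : z ∈ Icc a b) :
    HasDerivWithinAt (fun x => Real.exp (∫ y in a..x, f y))
      (f z * Real.exp (∫ y in a..z, f y)) (Icc a b) z := by
  have : Fact (z ∈ Icc a b) := ⟨hz⟩
  have hint : IntervalIntegrable f MeasureTheory.volume a z := by
    refine (hf.mono ?_).intervalIntegrable
    rw [uIcc_of_le hz.1]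
    exact Icc_subset_Icc le_rfl hz.2
  have hprim : HasDerivWithinAt (fun x => ∫ y in a..x, f y) (f z) (Icc a b) z :=
    intervalIntegral.integral_hasDerivWithinAt_right hint
      (hf.stronglyMeasurableAtFilter_nhdsWithin measurableSet_Icc z) (hf z hz)
  simpa only [mul_comm] using hprim.exp

theorem derivWithin_eq_zero_of_eqOn_zero {f : ℝ → ℝ} {s : Set ℝ} {x : ℝ}
    (hf : EqOn f 0 s) (hx : x ∈ s) : derivWithin f s x = 0 := by
  rw [derivWithin_congr hf (hf hx)]
  exact congrFun (derivWithin_const s (0 : ℝ)) x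

theorem flux_eqOn_zero {a b : ℝ} (hab : a < b) {c D φ : ℝ → ℝ}
    (hc : ContinuousOn c (Icc a b)) (hD : ContinuousOn D (Icc a b))
    (hD0 : ∀ x ∈ Icc a b, D x ≠ 0)
    (hφ : ∀ x, φ x = Real.exp (∫ y in a..x, c y / D y)) :
    EqOn (fun z => c z * φ z - D z * derivWithin φ (Icc a b) z) 0 (Icc a b) := by
  intro z hz
  have hφ' : φ = fun x => Real.exp (∫ y in a..x, c y / D y) := funext hφ
  have hderiv : derivWithin φ (Icc a b) z = c z / D z * φ z := by
    rw [hφ']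
    exact (hasDerivWithinAt_exp_intervalIntegral (f := fun y => c y / D y) (hc.div hD hD0)
      hz).derivWithin (uniqueDiffOn_Icc hab z hz)
  have hDz := hD0 z hz
  simp only [hderiv, Pi.zero_apply]
  field_simp
  ring

theorem stmt_6_general (l βt : ℝ) (hl : 0 < l) (hβt : 0 < βt) (c D μ : ℝ → ℝ)
    (hc : ContDiffOn ℝ 1 c (Set.Icc 0 l)) (hD : ContDiffOn ℝ 1 D (Set.Icc 0 l))
    (hDpos : ∀ x ∈ Set.Icc 0 l, 0 < D x)
    (β : ℝ → ℝ) (hβ : ∀ x, β x = βt * μ x)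
    (φ : ℝ → ℝ) (hφ : ∀ x, φ x = Real.exp (∫ y in (0:ℝ)..x, c y / D y)) :
    ∀ x ∈ Set.Icc 0 l,
      2 * β x * φ x =
        (2 * βt / (βt + 1)) *
          (derivWithin (fun z => c z * φ z - D z * derivWithin φ (Set.Icc 0 l) z)
              (Set.Icc 0 l) x + (β x + μ x) * φ x) := by
  intro x hx
  have hflux := flux_eqOn_zero hl hc.continuousOn hD.continuousOn
    (fun z hz => (hDpos z hz).ne') hφ
  have hβt1 : βt + 1 ≠ 0 := by linarith
  rw [derivWithin_eq_zero_of_eqOn_zero hflux hx, hβ]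
  field_simp
  ring

theorem stmt_6 (l βt : ℝ) (hl : 0 < l) (hβt : 0 < βt) (c D μ : ℝ → ℝ)
    (hc : ContDiffOn ℝ 1 c (Set.Icc 0 l)) (hD : ContDiffOn ℝ 1 D (Set.Icc 0 l))
    (hDpos : ∀ x ∈ Set.Icc 0 l, 0 < D x) (hμ : ContinuousOn μ (Set.Icc 0 l))
    (β : ℝ → ℝ) (hβ : ∀ x, β x = βt * μ x)
    (φ : ℝ → ℝ) (hφ : ∀ x, φ x = Real.exp (∫ y in (0:ℝ)..x, c y / D y)) :
    ∀ x ∈ Set.Icc 0 l,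
      2 * β x * φ x =
        (2 * βt / (βt + 1)) *
          (derivWithin (fun z => c z * φ z - D z * derivWithin φ (Set.Icc 0 l) z)
              (Set.Icc 0 l) x + (β x + μ x) * φ x) :=
  stmt_6_general l βt hl hβt c D μ hc hD hDpos β hβ φ hφ
end

section
/- Let l > 0, let γ, δ : [0,l] → ℝ be continuous and nonnegative, let β : [0,l] → ℝ be continuous and nonnegative, and θ ∈ [0,1]. Define Π₁(x) = exp(−∫₀ˣ(γ(y)+δ(y))dy) and assume θ·∫₀ˡ β(x)Π₁(x)dx ≠ 1. Given continuous ψ : [0,l] → ℝ, set C = θ∫₀ˡ β(x)(∫₀ˣ (Π₁(x)/Π₁(z))ψ(z)dz)dx · (1 − θ∫₀ˡ β(x)Π₁(x)dx)⁻¹ and φ(x) = Π₁(x)(C + ∫₀ˣ ψ(z)/Π₁(z) dz). Then φ is differentiable, satisfies (Mφ)(x) := φ'(x) + (γ(x)+δ(x))φ(x) = ψ(x) for all x ∈ [0,l], and satisfies the boundary condition φ(0) = θ∫₀ˡ β(x)φ(x)dx. -/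
/-!
With `Π₁ = exp (-∫₀ˣ (γ + δ))` one has `Π₁' = -(γ + δ) Π₁`, so by variation of constants
`φ = Π₁ (C + ∫₀ˣ ψ / Π₁)` solves `φ' + (γ + δ) φ = ψ` for every constant `C`, and `φ 0 = C`.
Moreover `∫₀ˡ β φ = C ∫₀ˡ β Π₁ + ∫₀ˡ β(x) ∫₀ˣ (Π₁(x) / Π₁(z)) ψ(z) dz dx`, which is affine in `C`;
the boundary condition is the fixed-point equation of this affine map, and the given `C` is its
unique solution because `θ ∫₀ˡ β Π₁ ≠ 1`.
-/

open Set MeasureTheory intervalIntegral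

section VariationOfConstants

variable {a b x : ℝ}

theorem ContinuousOn.hasDerivWithinAt_integral_Icc {E : Type*} [NormedAddCommGroup E]
    [NormedSpace ℝ E] [CompleteSpace E] {F : ℝ → E} (hF : ContinuousOn F (Icc a b))
    (hx : x ∈ Icc a b) :
    HasDerivWithinAt (fun u => ∫ y in a..u, F y) (F x) (Icc a b) x := by
  have : Fact (x ∈ Icc a b) := ⟨hx⟩
  have hint : IntervalIntegrable F volume a x :=
    (hF.mono (by rw [uIcc_of_le hx.1]; exact Icc_subset_Icc le_rfl hx.2)).intervalIntegrable
  exact integral_hasDerivWithinAt_right hint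
    ⟨Icc a b, self_mem_nhdsWithin, hF.aestronglyMeasurable measurableSet_Icc⟩ (hF x hx)

theorem hasDerivWithinAt_exp_neg_integral {m : ℝ → ℝ} (hm : ContinuousOn m (Icc a b))
    (hx : x ∈ Icc a b) :
    HasDerivWithinAt (fun u => Real.exp (-∫ y in a..u, m y))
      (-m x * Real.exp (-∫ y in a..x, m y)) (Icc a b) x := by
  convert (hm.hasDerivWithinAt_integral_Icc hx).neg.exp using 1
  · rfl
  · simp only [Pi.neg_apply]
    ring

theorem hasDerivWithinAt_variation_of_constants {m P ψ : ℝ → ℝ} (C : ℝ)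
    (hP : ∀ x ∈ Icc a b, HasDerivWithinAt P (-m x * P x) (Icc a b) x)
    (hP0 : ∀ x ∈ Icc a b, P x ≠ 0) (hψ : ContinuousOn ψ (Icc a b)) (hx : x ∈ Icc a b) :
    HasDerivWithinAt (fun u => P u * (C + ∫ z in a..u, ψ z / P z))
      (-m x * (P x * (C + ∫ z in a..x, ψ z / P z)) + ψ x) (Icc a b) x := by
  have hPc : ContinuousOn P (Icc a b) := fun y hy => (hP y hy).continuousWithinAt
  have hq : ContinuousOn (fun z => ψ z / P z) (Icc a b) := hψ.div hPc hP0
  have hprim := hq.hasDerivWithinAt_integral_Icc hx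
  refine ((hP x hx).mul ((hasDerivWithinAt_const x _ C).add hprim)).congr_deriv ?_
  simp only [Pi.add_apply]
  field_simp [hP0 x hx]
  ring

theorem integral_mul_variation_of_constants {β P ψ : ℝ → ℝ} (C : ℝ) (hab : a ≤ b)
    (hβ : ContinuousOn β (Icc a b)) (hP : ContinuousOn P (Icc a b))
    (hP0 : ∀ x ∈ Icc a b, P x ≠ 0) (hψ : ContinuousOn ψ (Icc a b)) :
    ∫ x in a..b, β x * (P x * (C + ∫ z in a..x, ψ z / P z)) =
      (∫ x in a..b, β x * P x) * C + ∫ x in a..b, β x * ∫ z in a..x, P x / P z * ψ z := by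
  have hq : ContinuousOn (fun z => ψ z / P z) (Icc a b) := hψ.div hP hP0
  have hprim : ContinuousOn (fun x => ∫ z in a..x, ψ z / P z) (Icc a b) :=
    fun x hx => (hq.hasDerivWithinAt_integral_Icc hx).continuousWithinAt
  have hI₁ : IntervalIntegrable (fun x => β x * P x * C) volume a b :=
    ((hβ.mul hP).mul continuousOn_const).intervalIntegrable_of_Icc hab
  have hI₂ : IntervalIntegrable (fun x => β x * (P x * ∫ z in a..x, ψ z / P z)) volume a b :=
    (hβ.mul (hP.mul hprim)).intervalIntegrable_of_Icc hab
  have hinner (x : ℝ) : ∫ z in a..x, P x / P z * ψ z = P x * ∫ z in a..x, ψ z / P z := by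
    rw [← intervalIntegral.integral_const_mul]
    exact integral_congr fun z _ => by ring
  simp_rw [hinner]
  rw [← intervalIntegral.integral_mul_const, ← integral_add hI₁ hI₂]
  exact integral_congr fun x _ => by ring

end VariationOfConstants

theorem stmt_11_general (l θ : ℝ) (hl : 0 < l)
    (γ δ β : ℝ → ℝ)
    (hγ : ContinuousOn γ (Set.Icc 0 l)) (hδ : ContinuousOn δ (Set.Icc 0 l))
    (hβ : ContinuousOn β (Set.Icc 0 l))
    (P1 : ℝ → ℝ) (hP1 : ∀ x, P1 x = Real.exp (-∫ y in (0:ℝ)..x, γ y + δ y))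
    (hne : θ * ∫ x in (0:ℝ)..l, β x * P1 x ≠ 1)
    (ψ : ℝ → ℝ) (hψ : ContinuousOn ψ (Set.Icc 0 l))
    (C : ℝ)
    (hC : C = θ * (∫ x in (0:ℝ)..l, β x * ∫ z in (0:ℝ)..x, (P1 x / P1 z) * ψ z) *
      (1 - θ * ∫ x in (0:ℝ)..l, β x * P1 x)⁻¹)
    (φ : ℝ → ℝ) (hφ : ∀ x, φ x = P1 x * (C + ∫ z in (0:ℝ)..x, ψ z / P1 z)) :
    (∀ x ∈ Set.Icc 0 l, DifferentiableWithinAt ℝ φ (Set.Icc 0 l) x) ∧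
    (∀ x ∈ Set.Icc 0 l, derivWithin φ (Set.Icc 0 l) x + (γ x + δ x) * φ x = ψ x) ∧
    φ 0 = θ * ∫ x in (0:ℝ)..l, β x * φ x := by
  have hP1d (x : ℝ) (hx : x ∈ Icc 0 l) :
      HasDerivWithinAt P1 (-(γ x + δ x) * P1 x) (Icc 0 l) x := by
    rw [funext hP1]
    exact hasDerivWithinAt_exp_neg_integral (hγ.add hδ) hx
  have hP1ne (x : ℝ) (_ : x ∈ Icc 0 l) : P1 x ≠ 0 := by
    rw [hP1]
    exact (Real.exp_pos _).ne'
  have hφd (x : ℝ) (hx : x ∈ Icc 0 l) :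
      HasDerivWithinAt φ (-(γ x + δ x) * φ x + ψ x) (Icc 0 l) x := by
    rw [funext hφ]
    exact hasDerivWithinAt_variation_of_constants C hP1d hP1ne hψ hx
  refine ⟨fun x hx => (hφd x hx).differentiableWithinAt, fun x hx => ?_, ?_⟩
  · rw [(hφd x hx).derivWithin (uniqueDiffOn_Icc hl x hx)]
    ring
  · have hφ0 : φ 0 = C := by simp [hφ, hP1]
    have hCfix : C * (1 - θ * ∫ x in (0:ℝ)..l, β x * P1 x) =
        θ * ∫ x in (0:ℝ)..l, β x * ∫ z in (0:ℝ)..x, P1 x / P1 z * ψ z := by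
      rw [hC, mul_assoc, inv_mul_cancel₀ (sub_ne_zero.mpr hne.symm), mul_one]
    have hcP1 : ContinuousOn P1 (Icc 0 l) := fun x hx => (hP1d x hx).continuousWithinAt
    have hsplit : ∫ x in (0:ℝ)..l, β x * φ x = (∫ x in (0:ℝ)..l, β x * P1 x) * C +
        ∫ x in (0:ℝ)..l, β x * ∫ z in (0:ℝ)..x, P1 x / P1 z * ψ z := by
      simp_rw [hφ]
      exact integral_mul_variation_of_constants C hl.le hβ hcP1 hP1ne hψ
    rw [hφ0, hsplit]
    linear_combination hCfix

theorem stmt_11 (l θ : ℝ) (hl : 0 < l) (hθ : θ ∈ Set.Icc (0:ℝ) 1)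
    (γ δ β : ℝ → ℝ)
    (hγ : ContinuousOn γ (Set.Icc 0 l)) (hδ : ContinuousOn δ (Set.Icc 0 l))
    (hβ : ContinuousOn β (Set.Icc 0 l))
    (hγ0 : ∀ x ∈ Set.Icc 0 l, 0 ≤ γ x) (hδ0 : ∀ x ∈ Set.Icc 0 l, 0 ≤ δ x)
    (hβ0 : ∀ x ∈ Set.Icc 0 l, 0 ≤ β x)
    (P1 : ℝ → ℝ) (hP1 : ∀ x, P1 x = Real.exp (-∫ y in (0:ℝ)..x, γ y + δ y))
    (hne : θ * ∫ x in (0:ℝ)..l, β x * P1 x ≠ 1)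
    (ψ : ℝ → ℝ) (hψ : ContinuousOn ψ (Set.Icc 0 l))
    (C : ℝ)
    (hC : C = θ * (∫ x in (0:ℝ)..l, β x * ∫ z in (0:ℝ)..x, (P1 x / P1 z) * ψ z) *
      (1 - θ * ∫ x in (0:ℝ)..l, β x * P1 x)⁻¹)
    (φ : ℝ → ℝ) (hφ : ∀ x, φ x = P1 x * (C + ∫ z in (0:ℝ)..x, ψ z / P1 z)) :
    (∀ x ∈ Set.Icc 0 l, DifferentiableWithinAt ℝ φ (Set.Icc 0 l) x) ∧
    (∀ x ∈ Set.Icc 0 l, derivWithin φ (Set.Icc 0 l) x + (γ x + δ x) * φ x = ψ x) ∧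
    φ 0 = θ * ∫ x in (0:ℝ)..l, β x * φ x :=
  stmt_11_general l θ hl γ δ β hγ hδ hβ P1 hP1 hne ψ hψ C hC φ hφ
end

section
/- Let l > 0, α > 0. Then ∫₀ˡ exp(−αx/(l−x)) dx = l·(1 − α e^α ∫_α^∞ (e^{−x}/x) dx). -/
/-!
The substitution `u = α l / (l - x)` maps `(0, l)` onto `(α, ∞)` and turns the integral into
`l α e^α ∫_α^∞ e^{-u} / u² du`; one integration by parts, with `-e^{-u}/u` as antiderivative of
`e^{-u}/u + e^{-u}/u²`, expresses this through the exponential integral `∫_α^∞ e^{-u}/u du`.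
-/

open MeasureTheory Set Real Filter

lemma integrableOn_exp_neg_div_pow_Ioi {a : ℝ} (ha : 0 < a) (n : ℕ) :
    IntegrableOn (fun u : ℝ => exp (-u) / u ^ n) (Ioi a) := by
  refine Integrable.mono ((exp_neg_integrableOn_Ioi a one_pos).const_mul (a ^ n)⁻¹) ?_ ?_
  · refine (ContinuousOn.div (by fun_prop) (by fun_prop) fun u hu => ?_).aestronglyMeasurable
      measurableSet_Ioi
    exact pow_ne_zero n (ha.trans hu).ne'
  · filter_upwards [ae_restrict_mem measurableSet_Ioi] with u hu
    have hu0 : 0 < u := ha.trans hu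
    rw [norm_of_nonneg (by positivity), norm_of_nonneg (by positivity), neg_one_mul,
      ← div_eq_inv_mul]
    gcongr
    exact hu.le

lemma hasDerivAt_neg_exp_neg_div {u : ℝ} (hu : u ≠ 0) :
    HasDerivAt (fun u => -(exp (-u) / u)) (exp (-u) / u + exp (-u) / u ^ 2) u := by
  refine ((hasDerivAt_neg' u).exp.div (hasDerivAt_id' u) hu).neg.congr_deriv ?_
  field_simp
  ring

lemma integral_exp_neg_div_sq_Ioi {a : ℝ} (ha : 0 < a) :
    ∫ u in Ioi a, exp (-u) / u ^ 2 = exp (-a) / a - ∫ u in Ioi a, exp (-u) / u := by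
  have hint₁ : IntegrableOn (fun u : ℝ => exp (-u) / u) (Ioi a) := by
    simpa using integrableOn_exp_neg_div_pow_Ioi ha 1
  have hint₂ := integrableOn_exp_neg_div_pow_Ioi ha 2
  have hdecay : Tendsto (fun u : ℝ => -(exp (-u) / u)) atTop (nhds 0) := by
    simpa [div_eq_mul_inv] using
      (tendsto_exp_neg_atTop_nhds_zero.mul tendsto_inv_atTop_zero).neg
  have hFTC := integral_Ioi_of_hasDerivAt_of_tendsto
    (ContinuousAt.continuousWithinAt (by fun_prop (disch := exact ha.ne')))
    (fun u hu => hasDerivAt_neg_exp_neg_div (ha.trans hu).ne') (hint₁.add hint₂) hdecay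
  rw [integral_add hint₁ hint₂] at hFTC
  linarith

section Substitution

variable {l a : ℝ}

lemma image_sub_div_Ioi (hl : 0 < l) (ha : 0 < a) :
    (fun u => l - l * a / u) '' Ioi a = Ioo 0 l := by
  ext x
  constructor
  · rintro ⟨u, hu, rfl⟩
    have hu0 : 0 < u := ha.trans hu
    have hlt : l * a / u < l := by
      rw [div_lt_iff₀ hu0]
      exact mul_lt_mul_of_pos_left hu hl
    constructor <;> linarith [show 0 < l * a / u by positivity]
  · rintro ⟨hx0, hxl⟩
    have hlx : 0 < l - x := by linarith
    refine ⟨l * a / (l - x), ?_, ?_⟩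
    · rw [mem_Ioi, lt_div_iff₀ hlx]
      nlinarith
    · field_simp
      ring

lemma injOn_sub_div_Ioi (ha : 0 < a) (hl : l ≠ 0) : InjOn (fun u => l - l * a / u) (Ioi a) := by
  intro u _ v _ huv
  simpa [div_eq_mul_inv, hl, ha.ne'] using huv

lemma hasDerivAt_sub_div {u : ℝ} (hu : u ≠ 0) :
    HasDerivAt (fun u => l - l * a / u) (l * a / u ^ 2) u := by
  refine (((hasDerivAt_const u (l * a)).div (hasDerivAt_id' u) hu).const_sub l).congr_deriv ?_
  ring

theorem integral_Ioo_eq_integral_Ioi_comp_sub_div {E : Type*} [NormedAddCommGroup E]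
    [NormedSpace ℝ E] (hl : 0 < l) (ha : 0 < a) (f : ℝ → E) :
    ∫ x in Ioo 0 l, f x = ∫ u in Ioi a, (l * a / u ^ 2) • f (l - l * a / u) := by
  have hderiv : ∀ u ∈ Ioi a, HasDerivWithinAt (fun u => l - l * a / u) (l * a / u ^ 2) (Ioi a) u :=
    fun u hu => (hasDerivAt_sub_div (ha.trans hu).ne').hasDerivWithinAt
  rw [← image_sub_div_Ioi hl ha, integral_image_eq_integral_abs_deriv_smul measurableSet_Ioi
    hderiv (injOn_sub_div_Ioi ha hl.ne') f]
  refine setIntegral_congr_fun measurableSet_Ioi fun u hu => ?_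
  have : 0 < u := ha.trans hu
  rw [abs_of_pos (by positivity)]

end Substitution

theorem stmt_13 (l α : ℝ) (hl : 0 < l) (hα : 0 < α) :
    ∫ x in (0:ℝ)..l, Real.exp (-α * x / (l - x)) =
      l * (1 - α * Real.exp α * ∫ x in Set.Ioi α, Real.exp (-x) / x) := by
  calc ∫ x in (0:ℝ)..l, exp (-α * x / (l - x))
      = ∫ x in Ioo 0 l, exp (-α * x / (l - x)) := by
        rw [intervalIntegral.integral_of_le hl.le, integral_Ioc_eq_integral_Ioo]
    _ = ∫ u in Ioi α, (l * α / u ^ 2) • exp (-α * (l - l * α / u) / (l - (l - l * α / u))) :=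
        integral_Ioo_eq_integral_Ioi_comp_sub_div hl hα _
    _ = ∫ u in Ioi α, l * α * exp α * (exp (-u) / u ^ 2) := by
        refine setIntegral_congr_fun measurableSet_Ioi fun u hu => ?_
        have hu0 : u ≠ 0 := (hα.trans hu).ne'
        have hexponent : -α * (l - l * α / u) / (l - (l - l * α / u)) = α - u := by
          rw [sub_sub_cancel]
          field_simp [hl.ne', hα.ne']
          ring
        rw [hexponent, exp_sub, exp_neg, smul_eq_mul]
        field_simp
    _ = l * α * exp α * (exp (-α) / α - ∫ u in Ioi α, exp (-u) / u) := by
        rw [integral_const_mul, integral_exp_neg_div_sq_Ioi hα]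
    _ = l * (1 - α * exp α * ∫ x in Ioi α, exp (-x) / x) := by
        rw [exp_neg]
        field_simp
end
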